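/- Let 1/4 < H < 1 and let ρ be a real number satisfying: ρ < 4H-3 if 1/4 < H < 1/2, and ρ < 2(H-1) if 1/2 ≤ H < 1. Then the triple series ∑_{j ∈ ℤ²₀} |j|^{2ρ+2} ∑_{h ∈ ℤ²₀, h ≠ j} ∑_{l ∈ ℤ²₀, l ≠ j, l ≠ h} |h-l|^{2ρ+2} / (|h|^{4H} |l|^{4H} |h-j|^{4H} |l-j|^{4H}) converges (is finite). -/

import Mathlib

/-- Euclidean norm of an element of `ℤ²`. -/
noncomputable def znorm (k : ℤ × ℤ) : ℝ :=
  Real.sqrt ((k.1 : ℝ) ^ 2 + (k.2 : ℝ) ^ 2)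

/-!
Write `α = 2ρ + 2`, `β = 4H` and `δ = max α 0`. Since `1 ≤ |h - l| ≤ 2 |h - j| |l - j|`, we have
`|h - l|^α ≤ 2^δ |h - j|^δ |l - j|^δ`, which decouples `h` and `l`: the inner double sum is at
most `2^δ P(j)²` with `P(j) = ∑_h |h|^(-β) |h - j|^(-(β - δ))`. As `max (|h|, |h - j|) ≥ |j| / 2`,
for `0 ≤ θ ≤ min a b` we get
`|h|^(-a) |h - j|^(-b) ≤ 2^θ |j|^(-θ) (|h|^(-(a + b - θ)) + |h - j|^(-(a + b - θ)))`,
so `P(j) = O(|j|^(-θ))` once `2β - δ - θ > 2`. The outer sum is then dominated by the lattice sum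
`∑_j |j|^(α - 2θ)`, finite when `2θ - α > 2`. The hypotheses on `H` and `ρ` are what makes such a
`θ ≤ β - δ` exist.
-/

open scoped ENNReal

lemma rpow_neg_mul_rpow_neg_le_of_le {x y J a b θ : ℝ} (hx : 0 < x) (hxy : x ≤ y) (hJ : 0 < J)
    (hJy : J ≤ 2 * y) (hθ : 0 ≤ θ) (hθb : θ ≤ b) :
    x ^ (-a) * y ^ (-b) ≤ 2 ^ θ * J ^ (-θ) * x ^ (-(a + b - θ)) := by
  have hy : 0 < y := hx.trans_le hxy
  have hyθ : y ^ (-θ) ≤ 2 ^ θ * J ^ (-θ) := by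
    have : (2 * y) ^ (-θ) ≤ J ^ (-θ) := Real.rpow_le_rpow_of_nonpos hJ hJy (by linarith)
    rw [Real.mul_rpow zero_le_two hy.le, Real.rpow_neg zero_le_two] at this
    rwa [← inv_mul_le_iff₀ (by positivity)]
  calc x ^ (-a) * y ^ (-b) = x ^ (-a) * y ^ (-(b - θ)) * y ^ (-θ) := by
        rw [mul_assoc, ← Real.rpow_add hy]; ring_nf
    _ ≤ x ^ (-a) * x ^ (-(b - θ)) * (2 ^ θ * J ^ (-θ)) := by
        have : y ^ (-(b - θ)) ≤ x ^ (-(b - θ)) := Real.rpow_le_rpow_of_nonpos hx hxy (by linarith)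
        gcongr
    _ = 2 ^ θ * J ^ (-θ) * x ^ (-(a + b - θ)) := by
        rw [← Real.rpow_add hx]; ring_nf

lemma rpow_neg_mul_rpow_neg_le {x y J a b θ : ℝ} (hx : 0 < x) (hy : 0 < y) (hJ : 0 < J)
    (hJxy : J ≤ x + y) (hθ : 0 ≤ θ) (hθa : θ ≤ a) (hθb : θ ≤ b) :
    x ^ (-a) * y ^ (-b) ≤ 2 ^ θ * J ^ (-θ) * (x ^ (-(a + b - θ)) + y ^ (-(a + b - θ))) := by
  rcases le_total x y with hxy | hyx
  · calc x ^ (-a) * y ^ (-b) ≤ 2 ^ θ * J ^ (-θ) * x ^ (-(a + b - θ)) :=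
          rpow_neg_mul_rpow_neg_le_of_le hx hxy hJ (by linarith) hθ hθb
      _ ≤ _ := by gcongr; exact le_add_of_nonneg_right (by positivity)
  · calc x ^ (-a) * y ^ (-b) = y ^ (-b) * x ^ (-a) := mul_comm _ _
      _ ≤ 2 ^ θ * J ^ (-θ) * y ^ (-(b + a - θ)) :=
          rpow_neg_mul_rpow_neg_le_of_le hy hyx hJ (by linarith) hθ hθa
      _ ≤ _ := by rw [add_comm b]; gcongr; exact le_add_of_nonneg_left (by positivity)

lemma rpow_le_rpow_max_of_one_le {x y α : ℝ} (hx : 1 ≤ x) (hxy : x ≤ y) :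
    x ^ α ≤ y ^ max α 0 := by
  rcases le_total α 0 with hα | hα
  · rw [max_eq_right hα, Real.rpow_zero]
    exact Real.rpow_le_one_of_one_le_of_nonpos hx hα
  · rw [max_eq_left hα]
    exact Real.rpow_le_rpow (by linarith) hxy hα

def intPairToComplex (k : ℤ × ℤ) : ℂ := ⟨k.1, k.2⟩

lemma znorm_eq_norm_intPairToComplex (k : ℤ × ℤ) : znorm k = ‖intPairToComplex k‖ := by
  rw [znorm, intPairToComplex, Complex.norm_def, Complex.normSq_mk, sq, sq]

lemma intPairToComplex_sub (a b : ℤ × ℤ) :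
    intPairToComplex (a - b) = intPairToComplex a - intPairToComplex b := by
  apply Complex.ext <;> simp [intPairToComplex]

lemma znorm_nonneg (k : ℤ × ℤ) : 0 ≤ znorm k := Real.sqrt_nonneg _

lemma znorm_rpow_nonneg (k : ℤ × ℤ) (s : ℝ) : 0 ≤ znorm k ^ s :=
  Real.rpow_nonneg (znorm_nonneg k) s

lemma abs_fst_le_znorm (k : ℤ × ℤ) : |(k.1 : ℝ)| ≤ znorm k := by
  simpa [znorm_eq_norm_intPairToComplex, intPairToComplex] using
    Complex.abs_re_le_norm (intPairToComplex k)

lemma abs_snd_le_znorm (k : ℤ × ℤ) : |(k.2 : ℝ)| ≤ znorm k := by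
  simpa [znorm_eq_norm_intPairToComplex, intPairToComplex] using
    Complex.abs_im_le_norm (intPairToComplex k)

lemma znorm_sub_le (a b c : ℤ × ℤ) : znorm (a - c) ≤ znorm (a - b) + znorm (b - c) := by
  simpa only [znorm_eq_norm_intPairToComplex, intPairToComplex_sub] using
    norm_sub_le_norm_sub_add_norm_sub _ _ _

lemma znorm_sub_comm (a b : ℤ × ℤ) : znorm (a - b) = znorm (b - a) := by
  simp only [znorm_eq_norm_intPairToComplex, intPairToComplex_sub, norm_sub_rev]

lemma one_le_znorm {k : ℤ × ℤ} (hk : k ≠ 0) : 1 ≤ znorm k := by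
  obtain h | h : k.1 ≠ 0 ∨ k.2 ≠ 0 := by
    contrapose! hk
    exact Prod.ext hk.1 hk.2
  · exact (by exact_mod_cast Int.one_le_abs h : (1 : ℝ) ≤ |(k.1 : ℝ)|).trans (abs_fst_le_znorm k)
  · exact (by exact_mod_cast Int.one_le_abs h : (1 : ℝ) ≤ |(k.2 : ℝ)|).trans (abs_snd_le_znorm k)

lemma znorm_pos {k : ℤ × ℤ} (hk : k ≠ 0) : 0 < znorm k := one_pos.trans_le (one_le_znorm hk)

lemma norm_finTwoArrowEquiv_symm_le_znorm (k : ℤ × ℤ) :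
    ‖(finTwoArrowEquiv ℤ).symm k‖ ≤ znorm k := by
  rw [EisensteinSeries.norm_eq_max_natAbs]
  simp only [finTwoArrowEquiv_symm_apply, Matrix.cons_val_zero, Matrix.cons_val_one,
    Nat.cast_max, Nat.cast_natAbs, Int.cast_abs]
  exact max_le (abs_fst_le_znorm k) (abs_snd_le_znorm k)

noncomputable def latticeZeta (s : ℝ) : ℝ≥0∞ :=
  ∑' k : {k : ℤ × ℤ // k ≠ 0}, ENNReal.ofReal (znorm k ^ (-s))

lemma latticeZeta_lt_top {s : ℝ} (hs : 2 < s) : latticeZeta s < ∞ := by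
  have hsum : Summable fun k : ℤ × ℤ => ‖(finTwoArrowEquiv ℤ).symm k‖ ^ (-s) :=
    (finTwoArrowEquiv ℤ).symm.summable_iff.mpr (EisensteinSeries.summable_one_div_norm_rpow hs)
  calc latticeZeta s
      ≤ ∑' k : {k : ℤ × ℤ // k ≠ 0}, ENNReal.ofReal (‖(finTwoArrowEquiv ℤ).symm k‖ ^ (-s)) := by
        refine ENNReal.tsum_le_tsum fun k => ENNReal.ofReal_le_ofReal ?_
        refine Real.rpow_le_rpow_of_nonpos ?_ (norm_finTwoArrowEquiv_symm_le_znorm k) (by linarith)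
        exact norm_pos_iff.mpr fun h =>
          k.2 (by simpa [← Prod.zero_eq_mk] using congrArg (finTwoArrowEquiv ℤ) h)
    _ ≤ ∑' k : ℤ × ℤ, ENNReal.ofReal (‖(finTwoArrowEquiv ℤ).symm k‖ ^ (-s)) :=
        ENNReal.tsum_comp_le_tsum_of_injective Subtype.val_injective _
    _ < ∞ := by
        rw [← ENNReal.ofReal_tsum_of_nonneg (fun _ => by positivity) hsum]
        exact ENNReal.ofReal_lt_top

noncomputable def pairWeight (a b : ℝ) (j h : ℤ × ℤ) : ℝ :=
  znorm h ^ (-a) * znorm (h - j) ^ (-b)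

lemma pairWeight_nonneg (a b : ℝ) (j h : ℤ × ℤ) : 0 ≤ pairWeight a b j h :=
  mul_nonneg (znorm_rpow_nonneg _ _) (znorm_rpow_nonneg _ _)

lemma exists_tsum_pairWeight_le {a b θ : ℝ} (hθ : 0 ≤ θ) (hθa : θ ≤ a) (hθb : θ ≤ b)
    (hs : 2 < a + b - θ) :
    ∃ C < ∞, ∀ j : ℤ × ℤ, j ≠ 0 →
      ∑' h : {h : ℤ × ℤ // h ≠ 0 ∧ h ≠ j}, ENNReal.ofReal (pairWeight a b j h)
        ≤ C * ENNReal.ofReal (znorm j ^ (-θ)) := by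
  set s := a + b - θ
  refine ⟨ENNReal.ofReal (2 ^ θ) * (latticeZeta s + latticeZeta s),
    ENNReal.mul_lt_top ENNReal.ofReal_lt_top
      (ENNReal.add_lt_top.mpr ⟨latticeZeta_lt_top hs, latticeZeta_lt_top hs⟩), fun j hj => ?_⟩
  have hfst : ∑' h : {h : ℤ × ℤ // h ≠ 0 ∧ h ≠ j}, ENNReal.ofReal (znorm h ^ (-s))
      ≤ latticeZeta s :=
    ENNReal.tsum_comp_le_tsum_of_injective
      (f := fun h : {h : ℤ × ℤ // h ≠ 0 ∧ h ≠ j} => (⟨h.1, h.2.1⟩ : {k : ℤ × ℤ // k ≠ 0}))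
      (fun _ _ e => Subtype.ext (Subtype.mk.inj e)) fun k => ENNReal.ofReal (znorm k ^ (-s))
  have hsnd : ∑' h : {h : ℤ × ℤ // h ≠ 0 ∧ h ≠ j}, ENNReal.ofReal (znorm (h - j) ^ (-s))
      ≤ latticeZeta s :=
    ENNReal.tsum_comp_le_tsum_of_injective
      (f := fun h : {h : ℤ × ℤ // h ≠ 0 ∧ h ≠ j} =>
        (⟨h.1 - j, sub_ne_zero.mpr h.2.2⟩ : {k : ℤ × ℤ // k ≠ 0}))
      (fun _ _ e => Subtype.ext (sub_left_inj.mp (Subtype.mk.inj e)))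
      fun k => ENNReal.ofReal (znorm k ^ (-s))
  calc ∑' h : {h : ℤ × ℤ // h ≠ 0 ∧ h ≠ j}, ENNReal.ofReal (pairWeight a b j h)
      ≤ ∑' h : {h : ℤ × ℤ // h ≠ 0 ∧ h ≠ j}, ENNReal.ofReal (2 ^ θ * znorm j ^ (-θ)) *
          (ENNReal.ofReal (znorm h ^ (-s)) + ENNReal.ofReal (znorm (h - j) ^ (-s))) := by
        refine ENNReal.tsum_le_tsum fun h => ?_
        rw [← ENNReal.ofReal_add (znorm_rpow_nonneg _ _) (znorm_rpow_nonneg _ _),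
          ← ENNReal.ofReal_mul (mul_nonneg (by positivity) (znorm_rpow_nonneg _ _))]
        refine ENNReal.ofReal_le_ofReal (rpow_neg_mul_rpow_neg_le (znorm_pos h.2.1)
          (znorm_pos (sub_ne_zero.mpr h.2.2)) (znorm_pos hj) ?_ hθ hθa hθb)
        simpa [znorm_sub_comm j, add_comm] using znorm_sub_le j h 0
    _ ≤ ENNReal.ofReal (2 ^ θ * znorm j ^ (-θ)) * (latticeZeta s + latticeZeta s) := by
        rw [ENNReal.tsum_mul_left, ENNReal.tsum_add]
        gcongr
    _ = _ := by
        rw [ENNReal.ofReal_mul (by positivity)]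
        ring

lemma znorm_sub_le_two_mul {h l j : ℤ × ℤ} (hhj : h ≠ j) (hlj : l ≠ j) :
    znorm (h - l) ≤ 2 * (znorm (h - j) * znorm (l - j)) := by
  have hu := one_le_znorm (sub_ne_zero.mpr hhj)
  have hv := one_le_znorm (sub_ne_zero.mpr hlj)
  have := znorm_sub_le h j l
  rw [znorm_sub_comm j] at this
  nlinarith

lemma rpow_div_le_pairWeight_mul {j h l : ℤ × ℤ} (hhj : h ≠ j) (hlj : l ≠ j) (hlh : l ≠ h)
    (α β : ℝ) :
    znorm (h - l) ^ α /
        (znorm h ^ β * znorm l ^ β * znorm (h - j) ^ β * znorm (l - j) ^ β)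
      ≤ 2 ^ max α 0 *
        (pairWeight β (β - max α 0) j h * pairWeight β (β - max α 0) j l) := by
  set δ := max α 0
  have hnum : znorm (h - l) ^ α ≤ 2 ^ δ * (znorm (h - j) ^ δ * znorm (l - j) ^ δ) :=
    calc znorm (h - l) ^ α ≤ (2 * (znorm (h - j) * znorm (l - j))) ^ δ :=
          rpow_le_rpow_max_of_one_le (one_le_znorm (sub_ne_zero.mpr hlh.symm))
            (znorm_sub_le_two_mul hhj hlj)
      _ = 2 ^ δ * (znorm (h - j) ^ δ * znorm (l - j) ^ δ) := by
          rw [Real.mul_rpow zero_le_two (mul_nonneg (znorm_nonneg _) (znorm_nonneg _)),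
            Real.mul_rpow (znorm_nonneg _) (znorm_nonneg _)]
  have hsplit : ∀ k : ℤ × ℤ, k ≠ j →
      pairWeight β (β - δ) j k = znorm (k - j) ^ δ * pairWeight β β j k := fun k hk => by
    rw [pairWeight, pairWeight, mul_left_comm, ← Real.rpow_add (znorm_pos (sub_ne_zero.mpr hk))]
    ring_nf
  calc znorm (h - l) ^ α /
        (znorm h ^ β * znorm l ^ β * znorm (h - j) ^ β * znorm (l - j) ^ β)
      = znorm (h - l) ^ α * (pairWeight β β j h * pairWeight β β j l) := by
        simp only [pairWeight, Real.rpow_neg (znorm_nonneg _), div_eq_mul_inv, mul_inv]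
        ring
    _ ≤ 2 ^ δ * (znorm (h - j) ^ δ * znorm (l - j) ^ δ) *
          (pairWeight β β j h * pairWeight β β j l) :=
        mul_le_mul_of_nonneg_right hnum (mul_nonneg (pairWeight_nonneg ..) (pairWeight_nonneg ..))
    _ = 2 ^ δ * (pairWeight β (β - δ) j h * pairWeight β (β - δ) j l) := by
        rw [hsplit h hhj, hsplit l hlj]
        ring

lemma tsum_tsum_le_sq_tsum_pairWeight (j : ℤ × ℤ) (α β : ℝ) :
    ∑' h : {h : ℤ × ℤ // h ≠ 0 ∧ h ≠ j}, ∑' l : {l : ℤ × ℤ // l ≠ 0 ∧ l ≠ j ∧ l ≠ h.1},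
        ENNReal.ofReal (znorm (h.1 - l.1) ^ α /
          (znorm h.1 ^ β * znorm l.1 ^ β * znorm (h.1 - j) ^ β * znorm (l.1 - j) ^ β))
      ≤ ENNReal.ofReal (2 ^ max α 0) *
          (∑' h : {h : ℤ × ℤ // h ≠ 0 ∧ h ≠ j},
            ENNReal.ofReal (pairWeight β (β - max α 0) j h)) ^ 2 := by
  set w : {h : ℤ × ℤ // h ≠ 0 ∧ h ≠ j} → ℝ≥0∞ :=
    fun h => ENNReal.ofReal (pairWeight β (β - max α 0) j h)
  calc _ ≤ ∑' h : {h : ℤ × ℤ // h ≠ 0 ∧ h ≠ j}, ∑' l : {l : ℤ × ℤ // l ≠ 0 ∧ l ≠ j},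
        ENNReal.ofReal (2 ^ max α 0) * w h * w l := by
        refine ENNReal.tsum_le_tsum fun h => le_trans (ENNReal.tsum_le_tsum fun l => ?_)
          (ENNReal.tsum_comp_le_tsum_of_injective
            (f := fun l : {l : ℤ × ℤ // l ≠ 0 ∧ l ≠ j ∧ l ≠ h.1} =>
              (⟨l.1, l.2.1, l.2.2.1⟩ : {l : ℤ × ℤ // l ≠ 0 ∧ l ≠ j}))
            (fun _ _ e => Subtype.ext (Subtype.mk.inj e))
            fun l => ENNReal.ofReal (2 ^ max α 0) * w h * w l)
        rw [← ENNReal.ofReal_mul (by positivity), ← ENNReal.ofReal_mul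
          (mul_nonneg (by positivity) (pairWeight_nonneg ..))]
        exact ENNReal.ofReal_le_ofReal
          ((rpow_div_le_pairWeight_mul h.2.2 l.2.2.1 l.2.2.2 α β).trans_eq (mul_assoc _ _ _).symm)
    _ = _ := by
        simp only [ENNReal.tsum_mul_left, ENNReal.tsum_mul_right]
        ring

lemma znorm_rpow_mul_sq_rpow_neg {j : ℤ × ℤ} (hj : j ≠ 0) (α θ : ℝ) :
    ENNReal.ofReal (znorm j ^ α) * ENNReal.ofReal (znorm j ^ (-θ)) ^ 2
      = ENNReal.ofReal (znorm j ^ (-(2 * θ - α))) := by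
  rw [← ENNReal.ofReal_pow (znorm_rpow_nonneg _ _), ← ENNReal.ofReal_mul (znorm_rpow_nonneg _ _),
    ← Real.rpow_natCast, ← Real.rpow_mul (znorm_nonneg _), ← Real.rpow_add (znorm_pos hj)]
  ring_nf

theorem tripleSeries_lt_top {α β θ : ℝ} (hθ : 0 ≤ θ) (hθβ : θ ≤ β - max α 0)
    (hpair : 2 < β + (β - max α 0) - θ) (hdiag : 2 < 2 * θ - α) :
    (∑' j : {j : ℤ × ℤ // j ≠ 0},
      ENNReal.ofReal (znorm j.1 ^ α) *
        ∑' h : {h : ℤ × ℤ // h ≠ 0 ∧ h ≠ j.1},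
          ∑' l : {l : ℤ × ℤ // l ≠ 0 ∧ l ≠ j.1 ∧ l ≠ h.1},
            ENNReal.ofReal
              (znorm (h.1 - l.1) ^ α /
                (znorm h.1 ^ β * znorm l.1 ^ β *
                  znorm (h.1 - j.1) ^ β * znorm (l.1 - j.1) ^ β))) < ∞ := by
  obtain ⟨C, hC, hpairC⟩ :=
    exists_tsum_pairWeight_le hθ (by linarith [le_max_right α 0]) hθβ hpair
  set K := ENNReal.ofReal (2 ^ max α 0)
  calc _ ≤ ∑' j : {j : ℤ × ℤ // j ≠ 0},
        ENNReal.ofReal (znorm j.1 ^ α) * (K * (C * ENNReal.ofReal (znorm j.1 ^ (-θ))) ^ 2) := by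
        refine ENNReal.tsum_le_tsum fun j => mul_le_mul_right ?_ _
        exact (tsum_tsum_le_sq_tsum_pairWeight j.1 α β).trans (by gcongr; exact hpairC j.1 j.2)
    _ = K * C ^ 2 * latticeZeta (2 * θ - α) := by
        rw [latticeZeta, ← ENNReal.tsum_mul_left]
        refine tsum_congr fun j => ?_
        rw [← znorm_rpow_mul_sq_rpow_neg j.2]
        ring
    _ < ∞ := ENNReal.mul_lt_top (ENNReal.mul_lt_top ENNReal.ofReal_lt_top
        (ENNReal.pow_lt_top hC)) (latticeZeta_lt_top hdiag)

lemma exists_admissible_exponent {H ρ : ℝ} (hH1 : 1 / 4 < H) (hH2 : H < 1)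
    (hρ1 : 1 / 4 < H → H < 1 / 2 → ρ < 4 * H - 3)
    (hρ2 : 1 / 2 ≤ H → H < 1 → ρ < 2 * (H - 1)) :
    ∃ θ : ℝ, 0 ≤ θ ∧ θ ≤ 4 * H - max (2 * ρ + 2) 0 ∧
      2 < 4 * H + (4 * H - max (2 * ρ + 2) 0) - θ ∧ 2 < 2 * θ - (2 * ρ + 2) := by
  have hbounds : max 0 ((2 * ρ + 2) / 2 + 1)
      < min (4 * H - max (2 * ρ + 2) 0) (4 * H + (4 * H - max (2 * ρ + 2) 0) - 2) := by
    rcases lt_or_ge H (1 / 2) with hH | hH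
    · have := hρ1 hH1 hH
      rw [max_eq_right (by linarith : 2 * ρ + 2 ≤ 0)]
      exact max_lt (lt_min (by linarith) (by linarith)) (lt_min (by linarith) (by linarith))
    · have := hρ2 hH hH2
      rcases le_total (2 * ρ + 2) 0 with hα | hα
      · rw [max_eq_right hα]
        exact max_lt (lt_min (by linarith) (by linarith)) (lt_min (by linarith) (by linarith))
      · rw [max_eq_left hα]
        exact max_lt (lt_min (by linarith) (by linarith)) (lt_min (by linarith) (by linarith))
  obtain ⟨θ, hlo, hhi⟩ := exists_between hbounds
  rw [max_lt_iff] at hlo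
  rw [lt_min_iff] at hhi
  exact ⟨θ, hlo.1.le, hhi.1.le, by linarith, by linarith⟩

theorem statement_6 (H ρ : ℝ) (hH1 : 1 / 4 < H) (hH2 : H < 1)
    (hρ1 : 1 / 4 < H → H < 1 / 2 → ρ < 4 * H - 3)
    (hρ2 : 1 / 2 ≤ H → H < 1 → ρ < 2 * (H - 1)) :
    (∑' j : {j : ℤ × ℤ // j ≠ 0},
      ENNReal.ofReal (znorm j.1 ^ (2 * ρ + 2)) *
        ∑' h : {h : ℤ × ℤ // h ≠ 0 ∧ h ≠ j.1},
          ∑' l : {l : ℤ × ℤ // l ≠ 0 ∧ l ≠ j.1 ∧ l ≠ h.1},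
            ENNReal.ofReal
              (znorm (h.1 - l.1) ^ (2 * ρ + 2) /
                (znorm h.1 ^ (4 * H) * znorm l.1 ^ (4 * H) *
                  znorm (h.1 - j.1) ^ (4 * H) * znorm (l.1 - j.1) ^ (4 * H)))) < ⊤ := by
  obtain ⟨θ, hθ, hθβ, hpair, hdiag⟩ := exists_admissible_exponent hH1 hH2 hρ1 hρ2
  exact tripleSeries_lt_top hθ hθβ hpair hdiag
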